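/- Let (S, A, H, P, μ) be a finite episodic MDP with μ(s,a) ∈ (0,1] for all (s,a), let π⁺ be a deterministic target policy, and set c := min_{h,s} μ(s, π⁺_h(s)) > 0. Consider the combined manipulated MDP M̄ with rewards r̄_h(s,a) = μ(s,a) if a = π⁺_h(s) else 0 and transitions P̄_h(s,a) = P(s, π⁺_h(s)) for every a. For a policy π, define the expected deviation count D̄^π by backward induction: D̄^π_{H+1}(s) = 0 and D̄^π_h(s) = 1[π_h(s) ≠ π⁺_h(s)] + E_{s' ~ P(s, π⁺_h(s))}[D̄^π_{h+1}(s')]. Then for every deterministic policy π, every h ∈ {1,…,H+1}, and every state s: V̄^{π⁺}_h(s) − V̄^π_h(s) ≥ c · D̄^π_h(s). -/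
import Mathlib


open scoped BigOperators

namespace RLAttack

variable {S A : Type*} [Fintype S] [Fintype A]

/-- Expectation of `f` under a `PMF` on a finite type. -/
noncomputable def expVal (p : PMF S) (f : S → ℝ) : ℝ :=
  ∑ s' : S, (p s').toReal * f s'

/-- Auxiliary backward-induction value: `n` steps remaining, current step `h`. -/
noncomputable def valAux (r : ℕ → S → A → ℝ) (P : ℕ → S → A → PMF S)
    (π : ℕ → S → A) : ℕ → ℕ → S → ℝ
  | 0, _, _ => 0
  | n + 1, h, s => r h s (π h s) + expVal (P h s (π h s)) (valAux r P π n (h + 1))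

/-- Value function `V^π_h(s)` for horizon `H`: `V^π_{H+1} = 0` and
`V^π_h(s) = r_h(s, π_h(s)) + E_{s' ~ P_h(s, π_h(s))}[V^π_{h+1}(s')]`. -/
noncomputable def V (H : ℕ) (r : ℕ → S → A → ℝ) (P : ℕ → S → A → PMF S)
    (π : ℕ → S → A) (h : ℕ) (s : S) : ℝ :=
  valAux r P π (H + 1 - h) h s

/-- Q-value function `Q^π_h(s,a) = r_h(s,a) + E_{s' ~ P_h(s,a)}[V^π_{h+1}(s')]`. -/
noncomputable def Q (H : ℕ) (r : ℕ → S → A → ℝ) (P : ℕ → S → A → PMF S)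
    (π : ℕ → S → A) (h : ℕ) (s : S) (a : A) : ℝ :=
  r h s a + expVal (P h s a) (fun s' => V H r P π (h + 1) s')



/-- Combined-attack rewards: `r̄_h(s,a) = μ(s,a)` if `a = π⁺_h(s)`, else `0`. -/
noncomputable def rComb [DecidableEq A] (μ : S → A → ℝ) (πp : ℕ → S → A) :
    ℕ → S → A → ℝ :=
  fun h s a => if a = πp h s then μ s a else 0

/-- Combined-attack transitions: `P̄_h(s,a) = P(s, π⁺_h(s))` for every `a`. -/
noncomputable def PComb (P : S → A → PMF S) (πp : ℕ → S → A) :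
    ℕ → S → A → PMF S :=
  fun h s _ => P s (πp h s)

/-- Expected deviation count in the manipulated MDP:
`D̄^π_{H+1} = 0`, `D̄^π_h(s) = 1[π_h(s) ≠ π⁺_h(s)] + E_{s'~P(s,π⁺_h(s))}[D̄^π_{h+1}(s')]`. -/
noncomputable def DevBar [DecidableEq A] (H : ℕ) (P : S → A → PMF S)
    (πp π : ℕ → S → A) : ℕ → S → ℝ :=
  V H (fun h s _ => if π h s = πp h s then 0 else 1) (PComb P πp) π

lemma expVal_sub (p : PMF S) (f g : S → ℝ) :
    expVal p f - expVal p g = expVal p (fun s => f s - g s) := by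
  simp [expVal, mul_sub, Finset.sum_sub_distrib]

lemma expVal_mono (p : PMF S) {f g : S → ℝ} (h : ∀ s, g s ≤ f s) :
    expVal p g ≤ expVal p f := by
  apply Finset.sum_le_sum
  intro i _
  exact mul_le_mul_of_nonneg_left (h i) ENNReal.toReal_nonneg

lemma expVal_const_mul (p : PMF S) (c : ℝ) (f : S → ℝ) :
    expVal p (fun s => c * f s) = c * expVal p f := by
  simp only [expVal, Finset.mul_sum]
  exact Finset.sum_congr rfl (fun i _ => by ring)

lemma key_aux [DecidableEq A] (P : S → A → PMF S) (μ : S → A → ℝ)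
    (πp π : ℕ → S → A) (c : ℝ) (hc : 0 ≤ c) :
    ∀ n h, (∀ k s', h ≤ k → k < h + n → c ≤ μ s' (πp k s')) → ∀ s : S,
      valAux (rComb μ πp) (PComb P πp) πp n h s
        - valAux (rComb μ πp) (PComb P πp) π n h s
      ≥ c * valAux (fun h s _ => if π h s = πp h s then (0:ℝ) else 1)
          (PComb P πp) π n h s := by
  intro n
  induction n with
  | zero => intro h _ s; simp [valAux]
  | succ n ih =>
    intro h hk s
    have ih' : ∀ s' : S,
        c * valAux (fun h s _ => if π h s = πp h s then (0:ℝ) else 1)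
          (PComb P πp) π n (h+1) s'
        ≤ valAux (rComb μ πp) (PComb P πp) πp n (h+1) s'
          - valAux (rComb μ πp) (PComb P πp) π n (h+1) s' := by
      intro s'
      exact ih (h+1) (fun k s'' hk1 hk2 => hk k s'' (Nat.le_of_succ_le hk1)
        (by omega)) s'
    show _ ≥ _
    simp only [valAux, PComb]
    have hE : expVal (P s (πp h s)) (valAux (rComb μ πp) (PComb P πp) πp n (h+1))
        - expVal (P s (πp h s)) (valAux (rComb μ πp) (PComb P πp) π n (h+1))
        ≥ c * expVal (P s (πp h s))
            (valAux (fun h s _ => if π h s = πp h s then (0:ℝ) else 1)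
              (PComb P πp) π n (h+1)) := by
      rw [expVal_sub, ← expVal_const_mul]
      exact expVal_mono _ ih'
    have hr : rComb μ πp h s (πp h s)
        - rComb μ πp h s (π h s)
        ≥ c * (if π h s = πp h s then (0:ℝ) else 1) := by
      simp only [rComb, if_pos rfl]
      by_cases hpi : π h s = πp h s
      · simp [hpi]
      · simp only [if_neg hpi, mul_one, sub_zero]
        exact hk h s le_rfl (by omega)
    calc rComb μ πp h s (πp h s) + expVal (P s (πp h s)) _
          - (rComb μ πp h s (π h s) + expVal (P s (πp h s)) _)
        = (rComb μ πp h s (πp h s) - rComb μ πp h s (π h s))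
          + (expVal (P s (πp h s)) (valAux (rComb μ πp) (PComb P πp) πp n (h+1))
            - expVal (P s (πp h s)) (valAux (rComb μ πp) (PComb P πp) π n (h+1))) := by
          ring
      _ ≥ c * (if π h s = πp h s then (0:ℝ) else 1)
          + c * expVal (P s (πp h s))
            (valAux (fun h s _ => if π h s = πp h s then (0:ℝ) else 1)
              (PComb P πp) π n (h+1)) := add_le_add hr hE
      _ = c * ((if π h s = πp h s then (0:ℝ) else 1)
          + expVal (P s (πp h s))
            (valAux (fun h s _ => if π h s = πp h s then (0:ℝ) else 1)
              (PComb P πp) π n (h+1))) := by ring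

/-- In the combined manipulated MDP with `μ(s,a) ∈ (0,1]` and
`c := min_{h,s} μ(s, π⁺_h(s)) > 0`, for every policy `π`, step `h ∈ {1,…,H+1}` and state
`s`, the value gap satisfies `V̄^{π⁺}_h(s) − V̄^π_h(s) ≥ c · D̄^π_h(s)`. -/
theorem statement15 {S A : Type*} [Fintype S] [Fintype A] [Nonempty S] [Nonempty A]
    [DecidableEq A]
    (H : ℕ) (hH : 1 ≤ H) (P : S → A → PMF S) (μ : S → A → ℝ)
    (hμ : ∀ s a, μ s a ∈ Set.Ioc (0 : ℝ) 1) (πp : ℕ → S → A) :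
    0 < (Finset.Icc 1 H ×ˢ (Finset.univ : Finset S)).inf'
          (Finset.Nonempty.product (Finset.nonempty_Icc.mpr hH) Finset.univ_nonempty)
          (fun p => μ p.2 (πp p.1 p.2)) ∧
    ∀ π : ℕ → S → A, ∀ h ∈ Finset.Icc 1 (H + 1), ∀ s : S,
      V H (rComb μ πp) (PComb P πp) πp h s - V H (rComb μ πp) (PComb P πp) π h s
        ≥ (Finset.Icc 1 H ×ˢ (Finset.univ : Finset S)).inf'
            (Finset.Nonempty.product (Finset.nonempty_Icc.mpr hH) Finset.univ_nonempty)
            (fun p => μ p.2 (πp p.1 p.2)) * DevBar H P πp π h s := by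
  set c := (Finset.Icc 1 H ×ˢ (Finset.univ : Finset S)).inf'
      (Finset.Nonempty.product (Finset.nonempty_Icc.mpr hH) Finset.univ_nonempty)
      (fun p => μ p.2 (πp p.1 p.2)) with hc
  have hcpos : 0 < c := by
    rw [hc, Finset.lt_inf'_iff]
    intro p _
    exact (hμ p.2 (πp p.1 p.2)).1
  refine ⟨hcpos, ?_⟩
  intro π h hmem s
  simp only [Finset.mem_Icc] at hmem
  have hcle : ∀ k s', h ≤ k → k < h + (H + 1 - h) → c ≤ μ s' (πp k s') := by
    intro k s' hk1 hk2
    have hp : (k, s') ∈ Finset.Icc 1 H ×ˢ (Finset.univ : Finset S) := by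
      have h1 : 1 ≤ h := hmem.1
      have h2 : h ≤ H + 1 := hmem.2
      simp only [Finset.mem_product, Finset.mem_Icc, Finset.mem_univ, and_true]
      omega
    exact Finset.inf'_le (fun p => μ p.2 (πp p.1 p.2)) hp
  exact key_aux P μ πp π c hcpos.le (H + 1 - h) h hcle s

end RLAttack
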